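/- Let X and Y be locally compact, connected Hausdorff spaces, ρ a quasi-integral on C_c(X) and η a quasi-integral on C_c(Y). If ρ and η are both almost simple, then η × ρ is a quasi-integral on C_c(X × Y) and is almost simple. -/

import Mathlib

open scoped ENNReal CompactlySupported
open CompactlySupportedContinuousMap

namespace QLF

variable {X Y : Type*}

/-- Membership in the singly generated subalgebra `B(f)`:
`g ∈ B(f)` iff `g = φ ∘ f` for some continuous `φ` with `φ 0 = 0`. -/
def InB [TopologicalSpace X] (f g : C_c(X, ℝ)) : Prop :=
  ∃ φ : C(ℝ, ℝ), φ 0 = 0 ∧ ∀ x, g x = φ (f x)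

/-- A quasi-integral (quasi-linear functional) on `C_c(X)`. -/
structure IsQuasiIntegral [TopologicalSpace X] (ρ : C_c(X, ℝ) → ℝ) : Prop where
  smul : ∀ (a : ℝ) (f : C_c(X, ℝ)), ρ (a • f) = a * ρ f
  add : ∀ f g h : C_c(X, ℝ), InB f g → InB f h → ρ (g + h) = ρ g + ρ h
  pos : ∀ f : C_c(X, ℝ), (∀ x, 0 ≤ f x) → 0 ≤ ρ f

/-- The value of the topological measure corresponding to `ρ` on an open set. -/
noncomputable def qiOpen [TopologicalSpace X] (ρ : C_c(X, ℝ) → ℝ) (U : Set X) : ℝ≥0∞ :=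
  ⨆ (f : C_c(X, ℝ)) (_ : (∀ x, 0 ≤ f x ∧ f x ≤ 1) ∧ tsupport f ⊆ U), ENNReal.ofReal (ρ f)

open Classical in
/-- The topological measure corresponding to a quasi-integral `ρ`:
on open sets given by `qiOpen`, on other (closed) sets by outer regularity. -/
noncomputable def qiMeas [TopologicalSpace X] (ρ : C_c(X, ℝ) → ℝ) (A : Set X) : ℝ≥0∞ :=
  if IsOpen A then qiOpen ρ A
  else ⨅ (U : Set X) (_ : IsOpen U ∧ A ⊆ U), qiOpen ρ U

/-- A topological measure on `X` (as a set function on all sets; only its values on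
open and closed sets are constrained/meaningful). -/
def IsTopMeasure [TopologicalSpace X] (μ : Set X → ℝ≥0∞) : Prop :=
  (∀ A B : Set X, Disjoint A B → (IsCompact A ∨ IsOpen A) → (IsCompact B ∨ IsOpen B) →
      (IsCompact (A ∪ B) ∨ IsOpen (A ∪ B)) → μ (A ∪ B) = μ A + μ B) ∧
  (∀ U : Set X, IsOpen U → μ U = ⨆ (K : Set X) (_ : IsCompact K ∧ K ⊆ U), μ K) ∧
  (∀ F : Set X, IsClosed F → μ F = ⨅ (U : Set X) (_ : IsOpen U ∧ F ⊆ U), μ U)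

/-- A simple topological measure: assumes only the values 0 and 1 on open and closed sets. -/
def IsSimpleTM [TopologicalSpace X] (μ : Set X → ℝ≥0∞) : Prop :=
  IsTopMeasure μ ∧ ∀ A : Set X, IsOpen A ∨ IsClosed A → μ A = 0 ∨ μ A = 1

/-- A simple quasi-integral: its corresponding topological measure assumes only 0 and 1. -/
def IsSimpleQI [TopologicalSpace X] (ρ : C_c(X, ℝ) → ℝ) : Prop :=
  ∀ A : Set X, IsOpen A ∨ IsClosed A → qiMeas ρ A = 0 ∨ qiMeas ρ A = 1

/-- An almost simple quasi-integral: its corresponding topological measure is a positive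
scalar multiple of a simple topological measure. -/
def IsAlmostSimpleQI [TopologicalSpace X] (ρ : C_c(X, ℝ) → ℝ) : Prop :=
  ∃ (c : ℝ≥0∞) (μ' : Set X → ℝ≥0∞), 0 < c ∧ c ≠ ∞ ∧ IsSimpleTM μ' ∧
    ∀ A : Set X, IsOpen A ∨ IsClosed A → qiMeas ρ A = c * μ' A

/-- The composition `φ ∘ f` as an element of `C_c(X, ℝ)`, for continuous `φ` with `φ 0 = 0`. -/
noncomputable def compCc [TopologicalSpace X] (φ : C(ℝ, ℝ)) (hφ : φ 0 = 0)
    (f : C_c(X, ℝ)) : C_c(X, ℝ) :=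
  ⟨⟨fun x => φ (f x), φ.continuous.comp f.continuous⟩, f.hasCompactSupport'.comp_left hφ⟩

section Products

variable [TopologicalSpace X] [TopologicalSpace Y]

/-- The section `f_y ∈ C_c(X)` of `f ∈ C_c(X × Y)`, `f_y (x) = f (x, y)`. -/
noncomputable def fiberY [T2Space X] (f : C_c(X × Y, ℝ)) (y : Y) : C_c(X, ℝ) :=
  ⟨⟨fun x => f (x, y), f.continuous.comp (continuous_id.prodMk continuous_const)⟩,
    HasCompactSupport.intro (f.hasCompactSupport'.image continuous_fst)
      (fun x hx => by
        by_contra h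
        exact hx ⟨(x, y), subset_tsupport _ h, rfl⟩)⟩

/-- The section `f_x ∈ C_c(Y)` of `f ∈ C_c(X × Y)`, `f_x (y) = f (x, y)`. -/
noncomputable def fiberX [T2Space Y] (f : C_c(X × Y, ℝ)) (x : X) : C_c(Y, ℝ) :=
  ⟨⟨fun y => f (x, y), f.continuous.comp (continuous_const.prodMk continuous_id)⟩,
    HasCompactSupport.intro (f.hasCompactSupport'.image continuous_snd)
      (fun y hy => by
        by_contra h
        exact hy ⟨(x, y), subset_tsupport _ h, rfl⟩)⟩

/-- `T_ρ(f) (y) = ρ (f_y)` as a bare function on `Y`. -/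
noncomputable def Tmap [T2Space X] (ρ : C_c(X, ℝ) → ℝ) (f : C_c(X × Y, ℝ)) : Y → ℝ :=
  fun y => ρ (fiberY f y)

/-- `S_η(f) (x) = η (f_x)` as a bare function on `X`. -/
noncomputable def Smap [T2Space Y] (η : C_c(Y, ℝ) → ℝ) (f : C_c(X × Y, ℝ)) : X → ℝ :=
  fun x => η (fiberX f x)

open Classical in
/-- `T_ρ(f)` as an element of `C_c(Y, ℝ)` (when `ρ` is a quasi-integral, `T_ρ(f)` is indeed
continuous with compact support, and this definition takes the first branch). -/
noncomputable def TCc [T2Space X] (ρ : C_c(X, ℝ) → ℝ) (f : C_c(X × Y, ℝ)) : C_c(Y, ℝ) :=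
  if h : Continuous (Tmap ρ f) ∧ HasCompactSupport (Tmap ρ f)
  then ⟨⟨Tmap ρ f, h.1⟩, h.2⟩ else 0

open Classical in
/-- `S_η(f)` as an element of `C_c(X, ℝ)`. -/
noncomputable def SCc [T2Space Y] (η : C_c(Y, ℝ) → ℝ) (f : C_c(X × Y, ℝ)) : C_c(X, ℝ) :=
  if h : Continuous (Smap η f) ∧ HasCompactSupport (Smap η f)
  then ⟨⟨Smap η f, h.1⟩, h.2⟩ else 0

/-- The repeated quasi-integral `(η × ρ) (f) = η (T_ρ (f))`. -/
noncomputable def prodQI [T2Space X] (η : C_c(Y, ℝ) → ℝ) (ρ : C_c(X, ℝ) → ℝ) :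
    C_c(X × Y, ℝ) → ℝ := fun f => η (TCc ρ f)

/-- The repeated quasi-integral `(ρ × η) (f) = ρ (S_η (f))`. -/
noncomputable def prodQI' [T2Space Y] (ρ : C_c(X, ℝ) → ℝ) (η : C_c(Y, ℝ) → ℝ) :
    C_c(X × Y, ℝ) → ℝ := fun f => ρ (SCc η f)

/-- The tensor product `(g ⊗ h) (x, y) = g (x) * h (y)` as an element of `C_c(X × Y, ℝ)`. -/
noncomputable def tensor (g : C_c(X, ℝ)) (h : C_c(Y, ℝ)) : C_c(X × Y, ℝ) :=
  ⟨⟨fun p => g p.1 * h p.2,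
      (g.continuous.comp continuous_fst).mul (h.continuous.comp continuous_snd)⟩,
    HasCompactSupport.intro' (g.hasCompactSupport'.prod h.hasCompactSupport')
      ((isClosed_tsupport _).prod (isClosed_tsupport _))
      (fun p hp => by
        rcases not_and_or.mp (by simpa [Set.mem_prod] using hp) with h1 | h1
        · simp [image_eq_zero_of_notMem_tsupport h1]
        · simp [image_eq_zero_of_notMem_tsupport h1])⟩

end Products

/-- A topological measure is subadditive (equivalently, extends to a Borel measure). -/
def IsSubadditiveOnOpens [TopologicalSpace X] (μ : Set X → ℝ≥0∞) : Prop :=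
  ∀ U V : Set X, IsOpen U → IsOpen V → μ (U ∪ V) ≤ μ U + μ V

/-- `μ` is a positive scalar multiple of a point mass `δ_{x₀}` (on open and closed sets). -/
def IsPointMassMultiple [TopologicalSpace X] (μ : Set X → ℝ≥0∞) : Prop :=
  ∃ (c : ℝ≥0∞) (x₀ : X), 0 < c ∧ c ≠ ∞ ∧
    ∀ A : Set X, IsOpen A ∨ IsClosed A →
      μ A = c * A.indicator (fun _ => (1 : ℝ≥0∞)) x₀

end QLF

/-!
A quasi-integral `ρ` whose topological measure is `k` times a simple one behaves like `k` times
a point evaluation: the image measure of each `u ∈ C_c(X)` is concentrated at one value `t`, and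
`ρ (φ ∘ u) = k φ(t)` with `t = ρ u / k` for every continuous `φ` with `φ 0 = 0`. Fibrewise this
gives `T_ρ (φ ∘ f) = Φ ∘ T_ρ f` with `Φ s = k φ(s / k)`, so `η × ρ` is again a quasi-integral of
this kind; `T_ρ f` is continuous because such a `ρ` is Lipschitz for the sup norm.

The topological measure of `η × ρ` is computed by slicing: on open and on compact sets `A` it is
`k` times the `η`-measure of the set of `y` whose slice `A_y` has full `ρ`-measure. Its additivity
is therefore inherited from that of the measures of `ρ` and `η`.
-/

namespace QLF

open Set Topology Filter

noncomputable def ramp (a b : ℝ) : C(ℝ, ℝ) :=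
  ⟨fun s => max 0 (min 1 ((s - a) / (b - a))), by fun_prop⟩

noncomputable def plateau (t δ : ℝ) : C(ℝ, ℝ) :=
  ⟨fun s => 1 - ramp δ (2 * δ) |s - t|, by fun_prop⟩

section CutOff

variable {a b s t δ : ℝ}

lemma ramp_apply : ramp a b s = max 0 (min 1 ((s - a) / (b - a))) := rfl

lemma ramp_nonneg : 0 ≤ ramp a b s := le_max_left _ _

lemma ramp_le_one : ramp a b s ≤ 1 := max_le zero_le_one (min_le_left _ _)

lemma ramp_of_le (hab : a < b) (h : s ≤ a) : ramp a b s = 0 := by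
  have : (s - a) / (b - a) ≤ 0 := div_nonpos_of_nonpos_of_nonneg (by linarith) (by linarith)
  rw [ramp_apply, min_eq_right (this.trans zero_le_one), max_eq_left this]

lemma ramp_of_ge (hab : a < b) (h : b ≤ s) : ramp a b s = 1 := by
  have : 1 ≤ (s - a) / (b - a) := by rw [le_div_iff₀ (by linarith)]; linarith
  rw [ramp_apply, min_eq_left this, max_eq_right zero_le_one]

lemma ramp_mono (hab : a < b) {s' : ℝ} (h : s ≤ s') : ramp a b s ≤ ramp a b s' := by
  simp only [ramp_apply]
  gcongr

lemma ramp_zero_one_of_mem (h₀ : 0 ≤ s) (h₁ : s ≤ 1) : ramp 0 1 s = s := by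
  norm_num [ramp_apply, h₀, h₁]

lemma ramp_one_two : ramp 1 2 s = ramp 0 1 (s - 1) := by
  norm_num [ramp_apply]

lemma plateau_nonneg : 0 ≤ plateau t δ s := sub_nonneg.mpr ramp_le_one

lemma plateau_le_one : plateau t δ s ≤ 1 := sub_le_self _ ramp_nonneg

lemma plateau_of_le (hδ : 0 < δ) (h : |s - t| ≤ δ) : plateau t δ s = 1 := by
  rw [plateau, ContinuousMap.coe_mk, ramp_of_le (by linarith) h, sub_zero]

lemma plateau_of_ge (hδ : 0 < δ) (h : 2 * δ ≤ |s - t|) : plateau t δ s = 0 := by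
  rw [plateau, ContinuousMap.coe_mk, ramp_of_ge (by linarith) h, sub_self]

end CutOff

section QuasiIntegral

variable {X : Type*} [TopologicalSpace X] {τ : C_c(X, ℝ) → ℝ}

@[simp] lemma compCc_apply (φ : C(ℝ, ℝ)) (hφ : φ 0 = 0) (f : C_c(X, ℝ)) (x : X) :
    compCc φ hφ f x = φ (f x) := rfl

lemma inB_compCc (φ : C(ℝ, ℝ)) (hφ : φ 0 = 0) (f : C_c(X, ℝ)) : InB f (compCc φ hφ f) :=
  ⟨φ, hφ, fun _ => rfl⟩

@[simp] lemma compCc_id (f : C_c(X, ℝ)) : compCc (.id ℝ) rfl f = f := rfl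

lemma tsupport_compCc_subset (φ : C(ℝ, ℝ)) (hφ : φ 0 = 0) (f : C_c(X, ℝ)) :
    tsupport (compCc φ hφ f) ⊆ tsupport f :=
  tsupport_comp_subset hφ f

lemma tsupport_compCc_subset_preimage {F : Set ℝ} (hF : IsClosed F) {φ : C(ℝ, ℝ)}
    (hφ : φ 0 = 0) (hφF : ∀ s ∉ F, φ s = 0) (u : C_c(X, ℝ)) :
    tsupport (compCc φ hφ u) ⊆ u ⁻¹' F :=
  closure_minimal (fun _ hx => by_contra fun hxF => hx (hφF _ hxF)) (hF.preimage u.continuous)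

lemma isOpen_level (u : C_c(X, ℝ)) (s : ℝ) : IsOpen {x | s < u x} :=
  isOpen_lt continuous_const u.continuous

lemma exists_abs_le (f : C_c(X, ℝ)) : ∃ b, 0 < b ∧ ∀ x, |f x| ≤ b := by
  obtain ⟨C, hC⟩ := f.continuous.bounded_above_of_compact_support f.hasCompactSupport
  exact ⟨max C 1, by positivity, fun x => (hC x).trans (le_max_left _ _)⟩

lemma le_qiOpen {f : C_c(X, ℝ)} (hf : ∀ x, 0 ≤ f x ∧ f x ≤ 1) {U : Set X}
    (hfU : tsupport f ⊆ U) : ENNReal.ofReal (τ f) ≤ qiOpen τ U :=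
  le_iSup₂_of_le f ⟨hf, hfU⟩ le_rfl

lemma qiOpen_mono {U V : Set X} (h : U ⊆ V) : qiOpen τ U ≤ qiOpen τ V :=
  iSup₂_le fun _ hf => le_qiOpen hf.1 (hf.2.trans h)

lemma qiMeas_of_isOpen {U : Set X} (hU : IsOpen U) : qiMeas τ U = qiOpen τ U := if_pos hU

lemma qiMeas_le_qiOpen {A U : Set X} (hU : IsOpen U) (h : A ⊆ U) :
    qiMeas τ A ≤ qiOpen τ U := by
  by_cases hA : IsOpen A
  · rw [qiMeas_of_isOpen hA]; exact qiOpen_mono h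
  · rw [qiMeas, if_neg hA]; exact iInf₂_le U ⟨hU, h⟩

lemma qiMeas_mono {A B : Set X} (h : A ⊆ B) : qiMeas τ A ≤ qiMeas τ B := by
  by_cases hB : IsOpen B
  · rw [qiMeas_of_isOpen hB]; exact qiMeas_le_qiOpen hB h
  · conv_rhs => rw [qiMeas, if_neg hB]
    exact le_iInf₂ fun U hU => qiMeas_le_qiOpen hU.1 (h.trans hU.2)

lemma qiMeas_le_univ (A : Set X) : qiMeas τ A ≤ qiOpen τ univ :=
  qiMeas_le_qiOpen isOpen_univ (subset_univ A)

lemma qiMeas_eq_iInf (A : Set X) :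
    qiMeas τ A = ⨅ (U : Set X) (_ : IsOpen U ∧ A ⊆ U), qiMeas τ U := by
  refine le_antisymm (le_iInf₂ fun U hU => ?_) ?_
  · rw [qiMeas_of_isOpen hU.1]; exact qiMeas_le_qiOpen hU.1 hU.2
  · by_cases hA : IsOpen A
    · exact iInf₂_le A ⟨hA, subset_rfl⟩
    · rw [qiMeas, if_neg hA]
      exact le_iInf₂ fun U hU => (iInf₂_le U hU).trans_eq (qiMeas_of_isOpen hU.1)

lemma exists_lt_of_lt_qiOpen {U : Set X} {r : ℝ} (h : ENNReal.ofReal r < qiOpen τ U) :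
    ∃ f : C_c(X, ℝ), (∀ x, 0 ≤ f x ∧ f x ≤ 1) ∧ tsupport f ⊆ U ∧ r < τ f := by
  obtain ⟨f, hf⟩ := lt_iSup_iff.mp h
  obtain ⟨⟨hf01, hfU⟩, hlt⟩ := lt_iSup_iff.mp hf
  exact ⟨f, hf01, hfU, (ENNReal.ofReal_lt_ofReal_iff'.mp hlt).1⟩

lemma qiOpen_eq_iSup_qiMeas {U : Set X} (hU : IsOpen U) :
    qiOpen τ U = ⨆ (K : Set X) (_ : IsCompact K ∧ K ⊆ U), qiMeas τ K := by
  refine le_antisymm (iSup₂_le fun f hf => ?_) (iSup₂_le fun K hK => qiMeas_le_qiOpen hU hK.2)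
  refine le_iSup₂_of_le (tsupport f) ⟨f.hasCompactSupport, hf.2⟩ ?_
  by_cases hA : IsOpen (tsupport f)
  · rw [qiMeas_of_isOpen hA]; exact le_qiOpen hf.1 subset_rfl
  · rw [qiMeas, if_neg hA]
    exact le_iInf₂ fun V hV => le_qiOpen hf.1 hV.2

namespace IsQuasiIntegral

variable (hτ : IsQuasiIntegral τ)
include hτ

lemma map_zero : τ 0 = 0 := by
  simpa using hτ.smul 0 0

lemma map_neg (f : C_c(X, ℝ)) : τ (-f) = -τ f := by
  rw [← neg_one_smul ℝ f, hτ.smul, neg_one_mul]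

lemma map_compCc_add (u : C_c(X, ℝ)) {φ ψ χ : C(ℝ, ℝ)} (hφ : φ 0 = 0) (hψ : ψ 0 = 0)
    (hχ : χ 0 = 0) (hsum : ∀ s, χ s = φ s + ψ s) :
    τ (compCc χ hχ u) = τ (compCc φ hφ u) + τ (compCc ψ hψ u) := by
  have : compCc χ hχ u = compCc φ hφ u + compCc ψ hψ u := by ext x; simp [hsum]
  rw [this]
  exact hτ.add u _ _ (inB_compCc _ _ _) (inB_compCc _ _ _)

lemma map_compCc_mono (u : C_c(X, ℝ)) {φ ψ : C(ℝ, ℝ)} (hφ : φ 0 = 0) (hψ : ψ 0 = 0)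
    (h : ∀ s, φ s ≤ ψ s) : τ (compCc φ hφ u) ≤ τ (compCc ψ hψ u) := by
  have hd : (ψ - φ) 0 = 0 := by simp [hφ, hψ]
  have hsplit := hτ.map_compCc_add u hφ hd hψ fun s => by simp
  have : 0 ≤ τ (compCc (ψ - φ) hd u) := hτ.pos _ fun x => by simpa using h (u x)
  linarith

lemma abs_map_compCc_le (u : C_c(X, ℝ)) {φ ψ : C(ℝ, ℝ)} (hφ : φ 0 = 0) (hψ : ψ 0 = 0)
    (habs : ∀ s, ψ s = |φ s|) : |τ (compCc φ hφ u)| ≤ τ (compCc ψ hψ u) := by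
  have hnφ : (-φ) 0 = 0 := by simp [hφ]
  have hneg : τ (compCc (-φ) hnφ u) = -τ (compCc φ hφ u) := by
    rw [← hτ.map_neg]; rfl
  have h₁ := hτ.map_compCc_mono u hφ hψ fun s => habs s ▸ le_abs_self (φ s)
  have h₂ := hτ.map_compCc_mono u hnφ hψ fun s => habs s ▸ neg_le_abs (φ s)
  rw [abs_le]
  constructor <;> linarith

lemma map_le_mul {K : ℝ} {v : C_c(X, ℝ)}
    (hK : ∀ f : C_c(X, ℝ), (∀ x, 0 ≤ f x ∧ f x ≤ 1) → tsupport f ⊆ tsupport v → τ f ≤ K)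
    {b : ℝ} (hb : 0 < b) (hv : ∀ x, 0 ≤ v x ∧ v x ≤ b) : τ v ≤ b * K := by
  have htest : ∀ x, 0 ≤ (b⁻¹ • v) x ∧ (b⁻¹ • v) x ≤ 1 := fun x => by
    simp only [CompactlySupportedContinuousMap.coe_smul, Pi.smul_apply, smul_eq_mul]
    exact ⟨by positivity [(hv x).1], by rw [inv_mul_le_iff₀ hb, mul_one]; exact (hv x).2⟩
  have := hK _ htest (tsupport_smul_subset_right (fun _ => b⁻¹) v)
  rwa [hτ.smul, inv_mul_le_iff₀ hb] at this

lemma qiOpen_empty : qiOpen τ (∅ : Set X) = 0 := by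
  refine le_antisymm (iSup₂_le fun f hf => ?_) zero_le
  have : f = 0 := by
    ext x
    by_contra hx
    exact hf.2 (subset_tsupport _ hx)
  simp [this, hτ.map_zero]

lemma qiMeas_empty : qiMeas τ (∅ : Set X) = 0 := by
  rw [qiMeas_of_isOpen isOpen_empty, hτ.qiOpen_empty]

lemma map_eq_zero_of_tsupport_subset {U : Set X} (hU : qiOpen τ U = 0) {v : C_c(X, ℝ)}
    (hvU : tsupport v ⊆ U) : τ v = 0 := by
  have hnonpos : ∀ w : C_c(X, ℝ), (∀ x, 0 ≤ w x) → tsupport w ⊆ U → τ w ≤ 0 := by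
    intro w hw hwU
    obtain ⟨b, hb, hwb⟩ := exists_abs_le w
    refine (hτ.map_le_mul (fun f hf hfw => ?_) hb
      fun x => ⟨hw x, (le_abs_self _).trans (hwb x)⟩).trans_eq (mul_zero b)
    have := (le_qiOpen hf (hfw.trans hwU)).trans_eq hU
    rwa [nonpos_iff_eq_zero, ENNReal.ofReal_eq_zero] at this
  set absφ : C(ℝ, ℝ) := ⟨fun s => |s|, continuous_abs⟩
  have habs := hτ.abs_map_compCc_le v (φ := .id ℝ) (ψ := absφ) rfl abs_zero fun _ => rfl
  have hzero := hnonpos (compCc absφ abs_zero v) (fun x => abs_nonneg _)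
    ((tsupport_compCc_subset _ _ v).trans hvU)
  exact abs_nonpos_iff.mp (habs.trans hzero)

/-- Although a quasi-integral need not be monotone, `g` and `h` are both functions of `g + h`. -/
lemma map_le_of_eq_one {g h : C_c(X, ℝ)}
    (hg : ∀ x, 0 ≤ g x ∧ g x ≤ 1) (hh : ∀ x, 0 ≤ h x ∧ h x ≤ 1)
    (h1 : ∀ x ∈ tsupport g, h x = 1) : τ g ≤ τ h := by
  have hr₁ : ramp 1 2 0 = 0 := ramp_of_le one_lt_two zero_le_one
  have hr₀ : ramp 0 1 0 = 0 := ramp_of_le zero_lt_one le_rfl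
  have hg' : g = compCc (ramp 1 2) hr₁ (g + h) := by
    ext x
    rw [compCc_apply, ramp_one_two, CompactlySupportedContinuousMap.add_apply]
    by_cases hx : x ∈ tsupport g
    · rw [h1 x hx, add_sub_cancel_right, ramp_zero_one_of_mem (hg x).1 (hg x).2]
    · rw [image_eq_zero_of_notMem_tsupport hx, ramp_of_le zero_lt_one (by linarith [(hh x).2])]
  have hh' : h = compCc (ramp 0 1) hr₀ (g + h) := by
    ext x
    rw [compCc_apply, CompactlySupportedContinuousMap.add_apply]
    by_cases hx : x ∈ tsupport g
    · rw [h1 x hx, ramp_of_ge zero_lt_one (by linarith [(hg x).1])]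
    · rw [image_eq_zero_of_notMem_tsupport hx, zero_add, ramp_zero_one_of_mem (hh x).1 (hh x).2]
  calc τ g = τ (compCc (ramp 1 2) hr₁ (g + h)) := congrArg τ hg'
    _ ≤ τ (compCc (ramp 0 1) hr₀ (g + h)) := hτ.map_compCc_mono _ hr₁ hr₀ fun s => by
      rw [ramp_one_two]; exact ramp_mono zero_lt_one (by linarith)
    _ = τ h := congrArg τ hh'.symm

end IsQuasiIntegral

end QuasiIntegral

section SimpleMultiple

variable {X : Type*} [TopologicalSpace X]

/-- `τ` is a quasi-integral whose topological measure is `k` times a simple one (the regularity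
of `qiMeas τ` holds for every `τ` and is not recorded). -/
structure IsSimpleMultiple (τ : C_c(X, ℝ) → ℝ) (k : ℝ) : Prop where
  isQuasiIntegral : IsQuasiIntegral τ
  pos : 0 < k
  qiMeas_eq_zero_or : ∀ A : Set X, IsOpen A ∨ IsClosed A →
    qiMeas τ A = 0 ∨ qiMeas τ A = ENNReal.ofReal k
  qiMeas_union : ∀ A B : Set X, Disjoint A B → (IsCompact A ∨ IsOpen A) →
    (IsCompact B ∨ IsOpen B) → (IsCompact (A ∪ B) ∨ IsOpen (A ∪ B)) →
    qiMeas τ (A ∪ B) = qiMeas τ A + qiMeas τ B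

/-- The identity `ρ (φ ∘ u) = φ (ρ u)` of simple quasi-integrals, scaled by `k`. -/
structure IsScaledQuasiHom (τ : C_c(X, ℝ) → ℝ) (k : ℝ) : Prop where
  isQuasiIntegral : IsQuasiIntegral τ
  pos : 0 < k
  map_compCc : ∀ (u : C_c(X, ℝ)) (φ : C(ℝ, ℝ)) (hφ : φ 0 = 0),
    τ (compCc φ hφ u) = k * φ (τ u / k)

noncomputable def levelSup (τ : C_c(X, ℝ) → ℝ) (k : ℝ) (u : C_c(X, ℝ)) : ℝ :=
  sSup (insert 0 {s : ℝ | 0 < s ∧ qiMeas τ {x | s < u x} = ENNReal.ofReal k})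

/-- The point at which the image measure of `u` is concentrated. -/
noncomputable def qiValue (τ : C_c(X, ℝ) → ℝ) (k : ℝ) (u : C_c(X, ℝ)) : ℝ :=
  levelSup τ k u - levelSup τ k (-u)

namespace IsSimpleMultiple

variable {τ : C_c(X, ℝ) → ℝ} {k : ℝ} (H : IsSimpleMultiple τ k)
include H

lemma ofReal_ne_zero : ENNReal.ofReal k ≠ 0 := (ENNReal.ofReal_pos.mpr H.pos).ne'

lemma qiMeas_le (A : Set X) : qiMeas τ A ≤ ENNReal.ofReal k := by
  refine (qiMeas_le_univ A).trans ?_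
  rw [← qiMeas_of_isOpen isOpen_univ]
  rcases H.qiMeas_eq_zero_or univ (Or.inl isOpen_univ) with h | h <;> simp [h]

lemma map_le_of_test {f : C_c(X, ℝ)} (hf : ∀ x, 0 ≤ f x ∧ f x ≤ 1) : τ f ≤ k := by
  have := (le_qiOpen hf (subset_univ _)).trans ((qiMeas_of_isOpen isOpen_univ).symm.trans_le
    (H.qiMeas_le univ))
  exact (ENNReal.ofReal_le_ofReal_iff H.pos.le).mp this

lemma abs_map_compCc_le (u : C_c(X, ℝ)) {φ : C(ℝ, ℝ)} (hφ : φ 0 = 0) {ε : ℝ} (hε : 0 < ε)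
    (hφε : ∀ s, |φ s| ≤ ε) : |τ (compCc φ hφ u)| ≤ ε * k := by
  set ψ : C(ℝ, ℝ) := ⟨fun s => |φ s|, by fun_prop⟩
  have hψ : ψ 0 = 0 := by simp [ψ, hφ]
  exact (H.isQuasiIntegral.abs_map_compCc_le u hφ hψ fun _ => rfl).trans
    (H.isQuasiIntegral.map_le_mul (fun f hf _ => H.map_le_of_test hf) hε
      fun x => ⟨abs_nonneg _, hφε _⟩)

lemma qiMeas_eq_zero_of_disjoint {U V : Set X} (hU : IsOpen U) (hV : IsOpen V)
    (hUV : Disjoint U V) (hVk : qiMeas τ V = ENNReal.ofReal k) : qiMeas τ U = 0 := by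
  have := H.qiMeas_union U V hUV (Or.inr hU) (Or.inr hV) (Or.inr (hU.union hV))
  have hle : qiMeas τ U + ENNReal.ofReal k ≤ 0 + ENNReal.ofReal k := by
    rw [← hVk, ← this, zero_add, hVk]; exact H.qiMeas_le _
  exact nonpos_iff_eq_zero.mp (ENNReal.le_of_add_le_add_right ENNReal.ofReal_ne_top hle)

variable (u : C_c(X, ℝ))

lemma bddAbove_levels :
    BddAbove (insert 0 {s : ℝ | 0 < s ∧ qiMeas τ {x | s < u x} = ENNReal.ofReal k}) := by
  obtain ⟨b, hb, hub⟩ := exists_abs_le u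
  refine ⟨b, ?_⟩
  rintro s (rfl | ⟨-, hsk⟩)
  · exact hb.le
  by_contra! hbs
  have : {x | s < u x} = ∅ :=
    eq_empty_of_forall_notMem fun x hx => (hx.trans_le ((le_abs_self _).trans (hub x))).not_gt hbs
  rw [this, qiMeas_of_isOpen isOpen_empty, H.isQuasiIntegral.qiOpen_empty] at hsk
  exact H.ofReal_ne_zero hsk.symm

lemma levelSup_nonneg : 0 ≤ levelSup τ k u :=
  le_csSup (H.bddAbove_levels u) (mem_insert _ _)

lemma qiMeas_level_of_lt_levelSup {s : ℝ} (hs : 0 < s) (hsu : s < levelSup τ k u) :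
    qiMeas τ {x | s < u x} = ENNReal.ofReal k := by
  obtain ⟨r, hr, hsr⟩ := exists_lt_of_lt_csSup (insert_nonempty _ _) hsu
  rcases hr with rfl | ⟨-, hrk⟩
  · exact absurd hsr hs.not_gt
  refine le_antisymm (H.qiMeas_le _) ?_
  rw [← hrk]
  exact qiMeas_mono fun x hx => hsr.trans hx

lemma qiMeas_level_of_levelSup_lt {s : ℝ} (hs : 0 < s) (hsu : levelSup τ k u < s) :
    qiMeas τ {x | s < u x} = 0 :=
  (H.qiMeas_eq_zero_or _ (Or.inl (isOpen_level u s))).resolve_right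
    fun hsk => hsu.not_ge (le_csSup (H.bddAbove_levels u) (mem_insert_of_mem _ ⟨hs, hsk⟩))

lemma levelSup_neg_eq_zero_or : levelSup τ k (-u) = 0 ∨ levelSup τ k u = 0 := by
  by_contra! h
  obtain ⟨h₁, h₂⟩ := h
  have hpos₁ := (H.levelSup_nonneg (-u)).lt_of_ne' h₁
  have hpos₂ := (H.levelSup_nonneg u).lt_of_ne' h₂
  have hfull := H.qiMeas_level_of_lt_levelSup (-u) (half_pos hpos₁) (half_lt_self hpos₁)
  have hnull := H.qiMeas_eq_zero_of_disjoint (isOpen_level u (levelSup τ k u / 2))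
    (isOpen_level _ _) ?_ hfull
  · rw [H.qiMeas_level_of_lt_levelSup u (half_pos hpos₂) (half_lt_self hpos₂)] at hnull
    exact H.ofReal_ne_zero hnull
  · refine disjoint_left.mpr fun x hx₁ hx₂ => ?_
    simp only [mem_ofPred_eq, CompactlySupportedContinuousMap.coe_neg, Pi.neg_apply] at hx₁ hx₂
    linarith

lemma qiMeas_near_levelSup {δ : ℝ} (hδ : 0 < δ) (hδu : δ < levelSup τ k u) :
    qiMeas τ {x | |u x - levelSup τ k u| < δ} = ENNReal.ofReal k := by
  -- `{t - δ < u}` is full and is the disjoint union of our set and the null compact set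
  -- `{t + δ ≤ u}`.
  set t := levelSup τ k u
  have hF : IsCompact {x | t + δ ≤ u x} := by
    refine u.hasCompactSupport.of_isClosed_subset (isClosed_le continuous_const u.continuous)
      fun x hx => subset_tsupport _ ?_
    have := H.levelSup_nonneg u
    exact ne_of_gt (by simp only [mem_ofPred_eq] at hx; linarith)
  have hFnull : qiMeas τ {x | t + δ ≤ u x} = 0 := by
    refine nonpos_iff_eq_zero.mp ((qiMeas_mono fun x (hx : t + δ ≤ u x) => ?_).trans
      (H.qiMeas_level_of_levelSup_lt u (s := t + δ / 2) (by linarith [H.levelSup_nonneg u])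
        (by linarith)).le)
    show t + δ / 2 < u x
    linarith
  have hunion : {x | t + δ ≤ u x} ∪ {x | |u x - t| < δ} = {x | t - δ < u x} := by
    ext x
    simp only [mem_union, mem_ofPred_eq, abs_sub_lt_iff]
    constructor
    · rintro (h | h) <;> [linarith; linarith [h.2]]
    · intro h
      by_cases h' : t + δ ≤ u x
      · exact Or.inl h'
      · exact Or.inr ⟨by linarith, by linarith⟩
  have hVopen : IsOpen {x | |u x - t| < δ} := isOpen_lt (by fun_prop) continuous_const
  have := H.qiMeas_union _ _ ?_ (Or.inl hF) (Or.inr hVopen)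
    (by rw [hunion]; exact Or.inr (isOpen_level u _))
  · rwa [hunion, hFnull, zero_add, H.qiMeas_level_of_lt_levelSup u (by linarith) (by linarith),
      eq_comm] at this
  · refine disjoint_left.mpr fun x (hx₁ : t + δ ≤ u x) (hx₂ : |u x - t| < δ) => ?_
    linarith [(abs_sub_lt_iff.mp hx₂).1]

lemma qiMeas_near_qiValue {δ : ℝ} (hδ : 0 < δ) (hδu : δ < |qiValue τ k u|) :
    qiMeas τ {x | |u x - qiValue τ k u| < δ} = ENNReal.ofReal k := by
  rcases H.levelSup_neg_eq_zero_or u with h | h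
  · have hv : qiValue τ k u = levelSup τ k u := by rw [qiValue, h, sub_zero]
    rw [hv] at hδu ⊢
    exact H.qiMeas_near_levelSup u hδ (by rwa [abs_of_nonneg (H.levelSup_nonneg u)] at hδu)
  · have hv : qiValue τ k u = -levelSup τ k (-u) := by rw [qiValue, h, zero_sub]
    have := H.qiMeas_near_levelSup (-u) hδ
      (by rwa [hv, abs_neg, abs_of_nonneg (H.levelSup_nonneg (-u))] at hδu)
    convert this using 4 with x
    rw [hv, ← abs_neg]
    simp only [CompactlySupportedContinuousMap.coe_neg, Pi.neg_apply]
    ring_nf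

lemma qiMeas_far_qiValue {δ : ℝ} (hδ : 0 < δ) :
    qiMeas τ {x | δ < |u x - qiValue τ k u|} = 0 := by
  have hopen : ∀ ε : ℝ, IsOpen {x | ε < |u x - qiValue τ k u|} := fun ε =>
    isOpen_lt continuous_const (by fun_prop)
  by_cases hu : qiValue τ k u = 0
  · have hzero : levelSup τ k u = 0 ∧ levelSup τ k (-u) = 0 := by
      have heq : levelSup τ k u = levelSup τ k (-u) := sub_eq_zero.mp hu
      rcases H.levelSup_neg_eq_zero_or u with h | h
      · exact ⟨heq.trans h, h⟩
      · exact ⟨h, heq.symm.trans h⟩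
    have hunion : {x | δ < |u x - qiValue τ k u|} = {x | δ < u x} ∪ {x | δ < (-u) x} := by
      ext x
      simp [hu, lt_abs]
    have hdisj : Disjoint {x | δ < u x} {x | δ < (-u) x} := by
      refine disjoint_left.mpr fun x (hx₁ : δ < u x) (hx₂ : δ < (-u) x) => ?_
      simp only [CompactlySupportedContinuousMap.coe_neg, Pi.neg_apply] at hx₂
      linarith
    rw [hunion, H.qiMeas_union _ _ hdisj (Or.inr (isOpen_level _ _)) (Or.inr (isOpen_level _ _))
      (Or.inr ((isOpen_level _ _).union (isOpen_level _ _))),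
      H.qiMeas_level_of_levelSup_lt u hδ (by rwa [hzero.1]),
      H.qiMeas_level_of_levelSup_lt (-u) hδ (by rwa [hzero.2]), add_zero]
  · set ε := min δ (|qiValue τ k u| / 2)
    have hε : 0 < ε := lt_min hδ (by positivity)
    refine H.qiMeas_eq_zero_of_disjoint (hopen δ) (isOpen_lt (by fun_prop) continuous_const) ?_
      (H.qiMeas_near_qiValue u hε ((min_le_right _ _).trans_lt (half_lt_self (abs_pos.mpr hu))))
    refine disjoint_left.mpr fun x (hx₁ : δ < _) (hx₂ : _ < ε) => ?_
    linarith [min_le_left δ (|qiValue τ k u| / 2)]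

lemma map_compCc_eq_zero_of_eqOn {ψ : C(ℝ, ℝ)} (hψ : ψ 0 = 0) {δ : ℝ} (hδ : 0 < δ)
    (hψδ : ∀ s, |s - qiValue τ k u| ≤ δ → ψ s = 0) : τ (compCc ψ hψ u) = 0 := by
  refine H.isQuasiIntegral.map_eq_zero_of_tsupport_subset
    (U := {x | δ / 2 < |u x - qiValue τ k u|}) ?_ ?_
  · rw [← qiMeas_of_isOpen (isOpen_lt continuous_const (by fun_prop))]
    exact H.qiMeas_far_qiValue u (half_pos hδ)
  · refine (tsupport_compCc_subset_preimage (F := {s | δ ≤ |s - qiValue τ k u|})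
      (isClosed_le continuous_const (by fun_prop)) hψ (fun s hs => hψδ s (not_le.mp hs).le)
      u).trans fun x (hx : δ ≤ _) => ?_
    show δ / 2 < _
    linarith

lemma map_compCc_eq_zero {ζ : C(ℝ, ℝ)} (hζ : ζ 0 = 0) (hv : ζ (qiValue τ k u) = 0) :
    τ (compCc ζ hζ u) = 0 := by
  set v := qiValue τ k u
  suffices h : ∀ ε > 0, |τ (compCc ζ hζ u)| ≤ ε * k by
    refine abs_nonpos_iff.mp (le_of_forall_pos_le_add fun ε hε => ?_)
    simpa [div_mul_cancel₀ ε H.pos.ne'] using h (ε / k) (div_pos hε H.pos)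
  intro ε hε
  -- Split `ζ` into a part supported near `v`, which is small, and a part vanishing near `v`.
  obtain ⟨δ, hδ, hζδ⟩ : ∃ δ > 0, ∀ s, |s - v| ≤ 2 * δ → |ζ s| ≤ ε := by
    obtain ⟨δ, hδ, h⟩ := Metric.continuous_iff.mp ζ.continuous v ε hε
    refine ⟨δ / 4, by positivity, fun s hs => ?_⟩
    have := h s (by rw [Real.dist_eq]; linarith)
    rw [Real.dist_eq, hv, sub_zero] at this
    exact this.le
  have h₁ : (ζ * plateau v δ) 0 = 0 := by simp [hζ]
  have h₂ : (ζ * (1 - plateau v δ)) 0 = 0 := by simp [hζ]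
  rw [H.isQuasiIntegral.map_compCc_add u h₁ h₂ hζ fun s => by simp; ring,
    H.map_compCc_eq_zero_of_eqOn u h₂ hδ fun s hs => by
      rw [ContinuousMap.mul_apply, ContinuousMap.sub_apply, plateau_of_le hδ hs]; simp,
    add_zero]
  refine H.abs_map_compCc_le u h₁ hε fun s => ?_
  rw [ContinuousMap.mul_apply, abs_mul]
  by_cases hs : |s - v| ≤ 2 * δ
  · refine (mul_le_of_le_one_right (abs_nonneg _) ?_).trans (hζδ s hs)
    rw [abs_of_nonneg plateau_nonneg]
    exact plateau_le_one
  · rw [plateau_of_ge hδ (not_le.mp hs).le, abs_zero, mul_zero]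
    exact hε.le

lemma exists_map_compCc_eq (hu : qiValue τ k u ≠ 0) :
    ∃ (χ : C(ℝ, ℝ)) (hχ : χ 0 = 0), χ (qiValue τ k u) = 1 ∧ τ (compCc χ hχ u) = k := by
  set v := qiValue τ k u
  have hδ : 0 < |v| / 4 := by positivity
  have hχ : plateau v (|v| / 4) 0 = 0 := plateau_of_ge hδ (by rw [zero_sub, abs_neg]; linarith)
  refine ⟨plateau v (|v| / 4), hχ, plateau_of_le hδ (by simp; positivity), le_antisymm
    (H.map_le_of_test fun x => ⟨plateau_nonneg, plateau_le_one⟩) ?_⟩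
  have hV := H.qiMeas_near_qiValue u hδ (by linarith [abs_pos.mpr hu])
  rw [qiMeas_of_isOpen (isOpen_lt (by fun_prop) continuous_const)] at hV
  have : qiOpen τ {x | |u x - v| < |v| / 4} ≤ ENNReal.ofReal (τ (compCc _ hχ u)) :=
    iSup₂_le fun g hg => ENNReal.ofReal_le_ofReal <| H.isQuasiIntegral.map_le_of_eq_one hg.1
      (fun x => ⟨plateau_nonneg, plateau_le_one⟩) fun x hx => plateau_of_le hδ (hg.2 hx).le
  rwa [hV, ENNReal.ofReal_le_ofReal_iff (H.isQuasiIntegral.pos _ fun x => plateau_nonneg)]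
    at this

lemma map_compCc_eq (φ : C(ℝ, ℝ)) (hφ : φ 0 = 0) :
    τ (compCc φ hφ u) = k * φ (qiValue τ k u) := by
  by_cases hu : qiValue τ k u = 0
  · rw [H.map_compCc_eq_zero u hφ (by rw [hu, hφ]), hu, hφ, mul_zero]
  obtain ⟨χ, hχ0, hχv, hχ⟩ := H.exists_map_compCc_eq u hu
  set c := φ (qiValue τ k u)
  set ζ := φ - c • χ
  have hζ : ζ 0 = 0 := by simp [ζ, hφ, hχ0]
  have hc : (c • χ) 0 = 0 := by simp [hχ0]
  have hsmul : compCc (c • χ) hc u = c • compCc χ hχ0 u := by ext; simp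
  rw [H.isQuasiIntegral.map_compCc_add u hζ hc hφ fun s => by simp [ζ],
    H.map_compCc_eq_zero u hζ (by simp [ζ, c, hχv]), zero_add, hsmul, H.isQuasiIntegral.smul, hχ,
    mul_comm]

lemma map_eq : τ u = k * qiValue τ k u := by
  simpa only [compCc_id, ContinuousMap.id_apply] using H.map_compCc_eq u (.id ℝ) rfl

lemma isScaledQuasiHom : IsScaledQuasiHom τ k where
  isQuasiIntegral := H.isQuasiIntegral
  pos := H.pos
  map_compCc u φ hφ := by rw [H.map_compCc_eq, H.map_eq u, mul_div_cancel_left₀ _ H.pos.ne']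

end IsSimpleMultiple

end SimpleMultiple

section ScaledQuasiHom

variable {X : Type*} [TopologicalSpace X]

namespace IsScaledQuasiHom

variable {τ : C_c(X, ℝ) → ℝ} {k : ℝ} (M : IsScaledQuasiHom τ k)
include M

lemma map_le_of_test {f : C_c(X, ℝ)} (hf : ∀ x, 0 ≤ f x ∧ f x ≤ 1) : τ f ≤ k := by
  have hmin : (⟨fun s => min s 1, by fun_prop⟩ : C(ℝ, ℝ)) 0 = 0 := by simp
  have := M.map_compCc f _ hmin
  have hf' : compCc _ hmin f = f := by ext x; simp [(hf x).2]
  rw [hf'] at this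
  rw [this]
  exact mul_le_of_le_one_right M.pos.le (min_le_right _ _)

lemma qiOpen_le (U : Set X) : qiOpen τ U ≤ ENNReal.ofReal k :=
  iSup₂_le fun _ hf => ENNReal.ofReal_le_ofReal (M.map_le_of_test hf.1)

lemma ofReal_ne_zero : ENNReal.ofReal k ≠ 0 := (ENNReal.ofReal_pos.mpr M.pos).ne'

lemma qiMeas_eq_of_le {A : Set X} (h : ENNReal.ofReal k ≤ qiMeas τ A) :
    qiMeas τ A = ENNReal.ofReal k :=
  le_antisymm ((qiMeas_le_univ A).trans (M.qiOpen_le univ)) h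

lemma exists_test_eq {U : Set X} (hU : qiOpen τ U ≠ 0) :
    ∃ g : C_c(X, ℝ), (∀ x, 0 ≤ g x ∧ g x ≤ 1) ∧ tsupport g ⊆ U ∧ τ g = k := by
  obtain ⟨g, hg, hgU, hpos⟩ := exists_lt_of_lt_qiOpen (r := 0) (by simpa [pos_iff_ne_zero])
  have ht : 0 < τ g / k := div_pos hpos M.pos
  have hr : ramp 0 (τ g / k) 0 = 0 := ramp_of_le ht le_rfl
  refine ⟨compCc _ hr g, fun x => ⟨ramp_nonneg, ramp_le_one⟩,
    (tsupport_compCc_subset _ _ g).trans hgU, ?_⟩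
  rw [M.map_compCc, ramp_of_ge ht le_rfl, mul_one]

lemma qiMeas_eq_zero_or (A : Set X) : qiMeas τ A = 0 ∨ qiMeas τ A = ENNReal.ofReal k := by
  have hopen : ∀ U, IsOpen U → qiMeas τ U ≠ 0 → qiMeas τ U = ENNReal.ofReal k := by
    intro U hU hne
    rw [qiMeas_of_isOpen hU] at hne ⊢
    obtain ⟨g, hg, hgU, hgk⟩ := M.exists_test_eq hne
    exact le_antisymm (M.qiOpen_le U) (hgk ▸ le_qiOpen hg hgU)
  refine or_iff_not_imp_left.mpr fun hne => M.qiMeas_eq_of_le ?_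
  rw [qiMeas_eq_iInf]
  exact le_iInf₂ fun U hU => (hopen U hU.1 fun h0 => hne (nonpos_iff_eq_zero.mp
    (h0 ▸ qiMeas_mono hU.2))).ge

lemma qiMeas_level_eq_zero (u : C_c(X, ℝ)) {s : ℝ} (hs : 0 < s) (hsu : τ u / k < s) :
    qiMeas τ {x | s < u x} = 0 := by
  obtain ⟨r, hr, hrs⟩ := exists_between (max_lt hsu hs)
  have hθ : ramp r s 0 = 0 := ramp_of_le hrs ((le_max_right _ _).trans hr.le)
  have hθu : τ (compCc _ hθ u) = 0 := by
    rw [M.map_compCc, ramp_of_le hrs ((le_max_left _ _).trans hr.le), mul_zero]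
  rw [qiMeas_of_isOpen (isOpen_level u s)]
  refine nonpos_iff_eq_zero.mp (iSup₂_le fun g hg => (ENNReal.ofReal_eq_zero.mpr ?_).le)
  rw [← hθu]
  exact M.isQuasiIntegral.map_le_of_eq_one hg.1 (fun x => ⟨ramp_nonneg, ramp_le_one⟩)
    fun x hx => ramp_of_ge hrs (hg.2 hx).le

lemma qiMeas_level_eq (u : C_c(X, ℝ)) {s : ℝ} (hs : 0 < s) (hsu : s < τ u / k) :
    qiMeas τ {x | s < u x} = ENNReal.ofReal k := by
  obtain ⟨r, hsr, hru⟩ := exists_between hsu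
  have hφ : ramp r (τ u / k) 0 = 0 := ramp_of_le hru (hs.trans hsr).le
  refine M.qiMeas_eq_of_le ?_
  rw [qiMeas_of_isOpen (isOpen_level u s)]
  have hsupp : tsupport (compCc _ hφ u) ⊆ {x | s < u x} := by
    refine (tsupport_compCc_subset_preimage isClosed_Ici hφ
      (fun r' hr' => ramp_of_le hru (not_le.mp hr').le) u).trans fun x (hx : r ≤ u x) => ?_
    show s < u x
    linarith
  have := le_qiOpen (τ := τ) (fun x => ⟨ramp_nonneg, ramp_le_one⟩) hsupp
  rwa [M.map_compCc, ramp_of_ge hru le_rfl, mul_one] at this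

lemma qiMeas_pos_set (u : C_c(X, ℝ)) (hu : 0 < τ u) :
    qiMeas τ {x | 0 < u x} = ENNReal.ofReal k := by
  have ht : 0 < τ u / k := div_pos hu M.pos
  refine M.qiMeas_eq_of_le ?_
  rw [← M.qiMeas_level_eq u (half_pos ht) (half_lt_self ht)]
  exact qiMeas_mono fun x (hx : _ < u x) => show 0 < u x by linarith [half_pos ht]

lemma le_div_of_level_subset {u v : C_c(X, ℝ)} {s t : ℝ} (hs : 0 < s) (ht : 0 < t)
    (hsu : s < τ u / k) (hsub : {x | s < u x} ⊆ {x | t < v x}) : t ≤ τ v / k := by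
  by_contra! h
  have := qiMeas_mono (τ := τ) hsub
  rw [M.qiMeas_level_eq u hs hsu, M.qiMeas_level_eq_zero v ht h] at this
  exact M.ofReal_ne_zero (nonpos_iff_eq_zero.mp this)

lemma map_mono {u v : C_c(X, ℝ)} (hu : ∀ x, 0 ≤ u x) (huv : ∀ x, u x ≤ v x) : τ u ≤ τ v := by
  by_contra! h
  have hv : 0 ≤ τ v / k := div_nonneg (M.isQuasiIntegral.pos v fun x => (hu x).trans (huv x))
    M.pos.le
  obtain ⟨s, hvs, hsu⟩ := exists_between (div_lt_div_of_pos_right h M.pos)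
  exact hvs.not_ge (M.le_div_of_level_subset (hv.trans_lt hvs) (hv.trans_lt hvs) hsu
    fun x (hx : s < u x) => show s < v x from hx.trans_le (huv x))

/-- The `2 b` (instead of `b`) is the price of only seeing level sets `{s < u}` with `s > 0`. -/
lemma map_le_add {u v : C_c(X, ℝ)} {b : ℝ} (hb : 0 < b) (huv : ∀ x, u x ≤ v x + b) :
    τ u ≤ τ v + 2 * k * b := by
  have key : ∀ f g : C_c(X, ℝ), (∀ x, f x ≤ g x + b) → b < τ f / k →
      τ f / k ≤ max (τ g / k + b) b := by
    intro f g hfg hbf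
    by_contra! h
    obtain ⟨s, hms, hsf⟩ := exists_between h
    have hbs := (le_max_right _ _).trans_lt hms
    have := M.le_div_of_level_subset (by linarith) (sub_pos.mpr hbs) hsf
      fun x (hx : s < f x) => show s - b < g x by linarith [hfg x]
    linarith [le_max_left (τ g / k + b) b]
  suffices h : τ u / k ≤ τ v / k + 2 * b by
    have := mul_le_mul_of_nonneg_right h M.pos.le
    rwa [add_mul, div_mul_cancel₀ _ M.pos.ne', div_mul_cancel₀ _ M.pos.ne', mul_right_comm]
      at this
  rcases lt_or_ge b (τ u / k) with hbu | hub
  · have := key u v huv hbu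
    rcases le_total (τ v / k + b) b with h | h
    · rw [max_eq_right h] at this; linarith
    · rw [max_eq_left h] at this; linarith
  · by_contra! hlt
    have hneg : ∀ w : C_c(X, ℝ), τ (-w) / k = -(τ w / k) := fun w => by
      rw [M.isQuasiIntegral.map_neg, neg_div]
    have hvu : ∀ x, (-v) x ≤ (-u) x + b := fun x => by
      simp only [CompactlySupportedContinuousMap.coe_neg, Pi.neg_apply]
      linarith [huv x]
    have := key (-v) (-u) hvu (by rw [hneg]; linarith)
    rw [hneg, hneg] at this
    rcases le_total (-(τ u / k) + b) b with h | h
    · rw [max_eq_right h] at this; linarith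
    · rw [max_eq_left h] at this; linarith

lemma abs_map_sub_le {u v : C_c(X, ℝ)} {b : ℝ} (hb : 0 < b) (huv : ∀ x, |u x - v x| ≤ b) :
    |τ u - τ v| ≤ 2 * k * b := by
  have h₁ := M.map_le_add (u := u) (v := v) hb fun x => by linarith [(abs_le.mp (huv x)).2]
  have h₂ := M.map_le_add (u := v) (v := u) hb fun x => by linarith [(abs_le.mp (huv x)).1]
  rw [abs_le]
  constructor <;> linarith

lemma exists_isCompact_subset {U : Set X} (hU : IsOpen U) (hUk : qiMeas τ U = ENNReal.ofReal k) :
    ∃ K, IsCompact K ∧ K ⊆ U ∧ qiMeas τ K = ENNReal.ofReal k := by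
  by_contra! h
  refine M.ofReal_ne_zero (hUk.symm.trans (nonpos_iff_eq_zero.mp ?_))
  rw [qiMeas_of_isOpen hU, qiOpen_eq_iSup_qiMeas hU]
  exact iSup₂_le fun K hK => ((M.qiMeas_eq_zero_or K).resolve_right (h K hK.1 hK.2)).le

lemma exists_isOpen_superset {A : Set X} (hA : qiMeas τ A = 0) :
    ∃ O, IsOpen O ∧ A ⊆ O ∧ qiMeas τ O = 0 := by
  by_contra! h
  refine M.ofReal_ne_zero (nonpos_iff_eq_zero.mp (hA ▸ ?_))
  rw [qiMeas_eq_iInf]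
  exact le_iInf₂ fun U hU => ((M.qiMeas_eq_zero_or U).resolve_left (h U hU.1 hU.2)).ge

end IsScaledQuasiHom

namespace IsSimpleMultiple

variable {τ : C_c(X, ℝ) → ℝ} {k : ℝ}

lemma isAlmostSimpleQI (H : IsSimpleMultiple τ k) : IsAlmostSimpleQI τ := by
  have hc0 : ENNReal.ofReal k ≠ 0 := H.ofReal_ne_zero
  have hcT : ENNReal.ofReal k ≠ ⊤ := ENNReal.ofReal_ne_top
  refine ⟨ENNReal.ofReal k, fun A => (ENNReal.ofReal k)⁻¹ * qiMeas τ A, pos_iff_ne_zero.mpr hc0,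
    hcT, ⟨⟨?_, ?_, ?_⟩, ?_⟩, ?_⟩
  · intro A B hAB hA hB hAB'
    simp only [H.qiMeas_union A B hAB hA hB hAB', mul_add]
  · intro U hU
    simp only [qiMeas_of_isOpen hU, qiOpen_eq_iSup_qiMeas hU, ENNReal.mul_iSup]
  · intro F _
    simp only [qiMeas_eq_iInf F,
      ENNReal.mul_iInf_of_ne (ENNReal.inv_ne_zero.mpr hcT) (ENNReal.inv_ne_top.mpr hc0)]
  · intro A hA
    rcases H.qiMeas_eq_zero_or A hA with h | h
    · exact Or.inl (by simp only [h, mul_zero])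
    · exact Or.inr (by simp only [h, ENNReal.inv_mul_cancel hc0 hcT])
  · intro A _
    rw [← mul_assoc, ENNReal.mul_inv_cancel hc0 hcT, one_mul]

end IsSimpleMultiple

lemma IsAlmostSimpleQI.isSimpleMultiple [T2Space X] {τ : C_c(X, ℝ) → ℝ}
    (h : IsAlmostSimpleQI τ) (hτ : IsQuasiIntegral τ) : ∃ k, IsSimpleMultiple τ k := by
  obtain ⟨c, μ, hc0, hcT, ⟨⟨hadd, -, -⟩, hμ⟩, hτμ⟩ := h
  have hc : ENNReal.ofReal c.toReal = c := ENNReal.ofReal_toReal hcT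
  have hτμ' : ∀ A : Set X, IsCompact A ∨ IsOpen A → qiMeas τ A = c * μ A :=
    fun A hA => hτμ A (hA.symm.imp id IsCompact.isClosed)
  refine ⟨c.toReal, hτ, ENNReal.toReal_pos hc0.ne' hcT, fun A hA => ?_,
    fun A B hAB hA hB hAB' => ?_⟩
  · rw [hc, hτμ A hA]
    rcases hμ A hA with h | h <;> simp [h]
  · rw [hτμ' _ hAB', hτμ' A hA, hτμ' B hB, hadd A B hAB hA hB hAB', mul_add]

end ScaledQuasiHom

section Product

variable {X Y : Type*}

def slice (A : Set (X × Y)) (y : Y) : Set X := {x | (x, y) ∈ A}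

lemma slice_mono {A B : Set (X × Y)} (h : A ⊆ B) (y : Y) : slice A y ⊆ slice B y :=
  fun _ hx => h hx

lemma slice_eq_empty {A : Set (X × Y)} {y : Y} (hy : y ∉ Prod.snd '' A) : slice A y = ∅ :=
  eq_empty_of_forall_notMem fun x hx => hy ⟨(x, y), hx, rfl⟩

variable [TopologicalSpace X]

def fullSlices (ρ : C_c(X, ℝ) → ℝ) (k : ℝ) (A : Set (X × Y)) : Set Y :=
  {y | qiMeas ρ (slice A y) = ENNReal.ofReal k}

lemma mem_fullSlices {ρ : C_c(X, ℝ) → ℝ} {k : ℝ} {A : Set (X × Y)} {y : Y} :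
    y ∈ fullSlices ρ k A ↔ qiMeas ρ (slice A y) = ENNReal.ofReal k :=
  Iff.rfl

namespace IsScaledQuasiHom

variable {ρ : C_c(X, ℝ) → ℝ} {k : ℝ} (M : IsScaledQuasiHom ρ k)
include M

lemma fullSlices_mono {A B : Set (X × Y)} (h : A ⊆ B) : fullSlices ρ k A ⊆ fullSlices ρ k B :=
  fun y hy => M.qiMeas_eq_of_le (mem_fullSlices.mp hy ▸ qiMeas_mono (slice_mono h y))

lemma fullSlices_subset_image_snd (A : Set (X × Y)) : fullSlices ρ k A ⊆ Prod.snd '' A :=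
  fun y hy => by_contra fun h => M.ofReal_ne_zero <| by
    rwa [mem_fullSlices, slice_eq_empty h, M.isQuasiIntegral.qiMeas_empty, eq_comm] at hy

end IsScaledQuasiHom

variable [TopologicalSpace Y]

lemma isOpen_slice {A : Set (X × Y)} (hA : IsOpen A) (y : Y) : IsOpen (slice A y) :=
  hA.preimage (Continuous.prodMk_left y)

lemma isCompact_slice [T1Space Y] {A : Set (X × Y)} (hA : IsCompact A) (y : Y) :
    IsCompact (slice A y) := by
  have : slice A y = Prod.fst '' (A ∩ univ ×ˢ {y}) := by
    ext x
    simp [slice]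
  rw [this]
  exact (hA.inter_right (isClosed_univ.prod isClosed_singleton)).image continuous_fst

lemma isOpen_setOf_slice_subset [T2Space Y] {A : Set (X × Y)} (hA : IsCompact A) {O : Set X}
    (hO : IsOpen O) : IsOpen {y | slice A y ⊆ O} := by
  have : {y | slice A y ⊆ O} = (Prod.snd '' (A ∩ Oᶜ ×ˢ univ))ᶜ := by
    ext y
    simp only [mem_ofPred_eq, mem_compl_iff, mem_image, not_exists, not_and]
    constructor
    · rintro h ⟨x, y'⟩ ⟨hA', hO', -⟩ rfl
      exact hO' (h hA')
    · intro h x hx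
      by_contra hxO
      exact h (x, y) ⟨hx, hxO, mem_univ _⟩ rfl
  rw [this]
  exact ((hA.inter_right (hO.isClosed_compl.prod isClosed_univ)).image
    continuous_snd).isClosed.isOpen_compl

lemma apply_eq_zero_of_notMem_image_fst {f : C_c(X × Y, ℝ)} {x : X}
    (hx : x ∉ Prod.fst '' tsupport f) (y : Y) : f (x, y) = 0 :=
  image_eq_zero_of_notMem_tsupport fun h => hx ⟨(x, y), h, rfl⟩

lemma tsupport_tensor_subset (g : C_c(X, ℝ)) (h : C_c(Y, ℝ)) :
    tsupport (tensor g h) ⊆ tsupport g ×ˢ tsupport h :=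
  subset_inter (tsupport_mul_subset_left.trans (tsupport_comp_subset_preimage g continuous_fst))
    (tsupport_mul_subset_right.trans (tsupport_comp_subset_preimage h continuous_snd))

lemma exists_eventually_eq_one [T2Space Y] [LocallyCompactSpace Y] {V : Set Y} (hV : IsOpen V)
    {y : Y} (hy : y ∈ V) :
    ∃ w : C_c(Y, ℝ), (∀ y, 0 ≤ w y) ∧ tsupport w ⊆ V ∧ ∀ᶠ y' in 𝓝 y, w y' = 1 := by
  obtain ⟨K, hKy, hKV, hK⟩ := local_compact_nhds (hV.mem_nhds hy)
  obtain ⟨w, hw1, hwc, hwV, hw01⟩ := exists_continuousMap_one_of_isCompact_subset_isOpen hK hV hKV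
  exact ⟨⟨w, hwc⟩, fun y => (hw01 y).1, hwV, eventually_of_mem hKy hw1⟩

namespace IsScaledQuasiHom

variable {ρ : C_c(X, ℝ) → ℝ} {k : ℝ} (M : IsScaledQuasiHom ρ k)
include M

lemma isOpen_fullSlices {A : Set (X × Y)} (hA : IsOpen A) : IsOpen (fullSlices ρ k A) := by
  refine isOpen_iff_mem_nhds.mpr fun y hy => ?_
  obtain ⟨K, hK, hKA, hKk⟩ := M.exists_isCompact_subset (isOpen_slice hA y) hy
  obtain ⟨U, V, -, hV, hKU, hyV, hUV⟩ := generalized_tube_lemma hK isCompact_singleton hA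
    fun p ⟨hp₁, (hp₂ : p.2 = y)⟩ => by rw [← Prod.mk.eta (p := p), hp₂]; exact hKA hp₁
  exact Filter.mem_of_superset (hV.mem_nhds (hyV rfl)) fun y' hy' =>
    M.qiMeas_eq_of_le (hKk ▸ qiMeas_mono fun x hx => hUV (mk_mem_prod (hKU hx) hy'))

lemma isClosed_fullSlices [T2Space Y] {A : Set (X × Y)} (hA : IsCompact A) :
    IsClosed (fullSlices ρ k A) := by
  refine isOpen_compl_iff.mp (isOpen_iff_mem_nhds.mpr fun y hy => ?_)
  obtain ⟨O, hO, hAO, hO0⟩ := M.exists_isOpen_superset ((M.qiMeas_eq_zero_or _).resolve_right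
    (mt mem_fullSlices.mpr hy))
  exact Filter.mem_of_superset ((isOpen_setOf_slice_subset hA hO).mem_nhds hAO)
    fun y' (hy' : slice A y' ⊆ O) hfull =>
      M.ofReal_ne_zero (mem_fullSlices.mp hfull ▸ nonpos_iff_eq_zero.mp (hO0 ▸ qiMeas_mono hy'))

lemma isCompact_fullSlices [T2Space Y] {A : Set (X × Y)} (hA : IsCompact A) :
    IsCompact (fullSlices ρ k A) :=
  (hA.image continuous_snd).of_isClosed_subset (M.isClosed_fullSlices hA)
    (M.fullSlices_subset_image_snd A)

lemma exists_tube_test {A : Set (X × Y)} (hA : IsOpen A) {y : Y} (hy : y ∈ fullSlices ρ k A) :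
    ∃ u : C_c(X, ℝ), (∀ x, 0 ≤ u x ∧ u x ≤ 1) ∧ ρ u = k ∧
      ∃ V, IsOpen V ∧ y ∈ V ∧ tsupport u ×ˢ V ⊆ A := by
  obtain ⟨K, hK, hKA, hKk⟩ := M.exists_isCompact_subset (isOpen_slice hA y) hy
  obtain ⟨U, V, hU, hV, hKU, hyV, hUV⟩ := generalized_tube_lemma hK isCompact_singleton hA
    fun p ⟨hp₁, (hp₂ : p.2 = y)⟩ => by rw [← Prod.mk.eta (p := p), hp₂]; exact hKA hp₁
  have hUk : qiOpen ρ U ≠ 0 := by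
    rw [← qiMeas_of_isOpen hU]
    exact ne_bot_of_le_ne_bot (hKk ▸ M.ofReal_ne_zero) (qiMeas_mono hKU)
  obtain ⟨u, hu, huU, huk⟩ := M.exists_test_eq hUk
  exact ⟨u, hu, huk, V, hV, hyV rfl, (prod_mono huU subset_rfl).trans hUV⟩

lemma exists_nhds_disjoint_fullSlices [T2Space Y] [RegularSpace Y] {L : Set (X × Y)}
    (hL : IsCompact L) {y : Y} (hy : y ∉ fullSlices ρ k L) :
    ∃ C ∈ 𝓝 y, ∃ W, IsOpen W ∧ L ⊆ W ∧ Disjoint (fullSlices ρ k W) C := by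
  obtain ⟨O, hO, hLO, hO0⟩ := M.exists_isOpen_superset ((M.qiMeas_eq_zero_or _).resolve_right hy)
  obtain ⟨C, hCy, hC, hCO⟩ :=
    exists_mem_nhds_isClosed_subset ((isOpen_setOf_slice_subset hL hO).mem_nhds hLO)
  refine ⟨C, hCy, univ ×ˢ Cᶜ ∪ O ×ˢ univ,
    (isOpen_univ.prod hC.isOpen_compl).union (hO.prod isOpen_univ), ?_, ?_⟩
  · rintro ⟨x, y'⟩ hxy
    by_cases hy' : y' ∈ C
    · exact Or.inr ⟨hCO hy' hxy, trivial⟩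
    · exact Or.inl ⟨trivial, hy'⟩
  · refine disjoint_left.mpr fun y' hy' hy'C => M.ofReal_ne_zero ?_
    have : slice (univ ×ˢ Cᶜ ∪ O ×ˢ univ) y' ⊆ O :=
      fun x hx => hx.elim (fun h => absurd hy'C h.2) And.left
    rw [← mem_fullSlices.mp hy']
    exact nonpos_iff_eq_zero.mp (hO0 ▸ qiMeas_mono this)

lemma exists_fullSlices_subset [T2Space Y] [LocallyCompactSpace Y] {L : Set (X × Y)}
    (hL : IsCompact L) {V : Set Y} (hV : IsOpen V) (hLV : fullSlices ρ k L ⊆ V) :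
    ∃ W, IsOpen W ∧ L ⊆ W ∧ fullSlices ρ k W ⊆ V := by
  -- Shrink `W` near each point of a compact neighbourhood `K` of `snd '' L`, then cut `W` down
  -- to `X × interior K`.
  obtain ⟨K, hK, hLK⟩ := exists_compact_superset (hL.image continuous_snd)
  obtain ⟨W, hW, hLW, hWK⟩ : ∃ W, IsOpen W ∧ L ⊆ W ∧ fullSlices ρ k W ∩ K ⊆ V := by
    refine hK.induction_on (p := fun B => ∃ W, IsOpen W ∧ L ⊆ W ∧ fullSlices ρ k W ∩ B ⊆ V)
      ⟨univ, isOpen_univ, subset_univ _, by simp⟩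
      (fun B B' hBB' ⟨W, hW, hLW, hWB'⟩ =>
        ⟨W, hW, hLW, (inter_subset_inter_right _ hBB').trans hWB'⟩)
      (fun B B' ⟨W, hW, hLW, hWB⟩ ⟨W', hW', hLW', hWB'⟩ => ⟨W ∩ W', hW.inter hW',
        subset_inter hLW hLW', fun y ⟨hy, hyB⟩ => hyB.elim
          (fun h => hWB ⟨M.fullSlices_mono inter_subset_left hy, h⟩)
          (fun h => hWB' ⟨M.fullSlices_mono inter_subset_right hy, h⟩)⟩) fun y _ => ?_
    by_cases hyV : y ∈ V
    · exact ⟨V, mem_nhdsWithin_of_mem_nhds (hV.mem_nhds hyV), univ, isOpen_univ, subset_univ _,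
        inter_subset_right⟩
    · obtain ⟨C, hC, W, hW, hLW, hWC⟩ := M.exists_nhds_disjoint_fullSlices hL fun h => hyV (hLV h)
      exact ⟨C, mem_nhdsWithin_of_mem_nhds hC, W, hW, hLW,
        fun y' hy' => absurd hy'.2 (disjoint_left.mp hWC hy'.1)⟩
  refine ⟨W ∩ univ ×ˢ interior K, hW.inter (isOpen_univ.prod isOpen_interior),
    subset_inter hLW fun p hp => ⟨trivial, hLK ⟨p, hp, rfl⟩⟩,
    fun y hy => hWK ⟨M.fullSlices_mono inter_subset_left hy, ?_⟩⟩
  obtain ⟨p, hp, rfl⟩ := M.fullSlices_subset_image_snd _ hy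
  exact interior_subset hp.2.2

end IsScaledQuasiHom

namespace IsSimpleMultiple

variable {ρ : C_c(X, ℝ) → ℝ} {k : ℝ} (H : IsSimpleMultiple ρ k)
include H

lemma qiMeas_slice_union [T1Space Y] {A B : Set (X × Y)}
    (hAB : Disjoint A B) (hA : IsCompact A ∨ IsOpen A) (hB : IsCompact B ∨ IsOpen B)
    (hAB' : IsCompact (A ∪ B) ∨ IsOpen (A ∪ B)) (y : Y) :
    qiMeas ρ (slice (A ∪ B) y) = qiMeas ρ (slice A y) + qiMeas ρ (slice B y) := by
  have hslice : ∀ {S : Set (X × Y)}, IsCompact S ∨ IsOpen S →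
      IsCompact (slice S y) ∨ IsOpen (slice S y) :=
    Or.imp (isCompact_slice · y) (isOpen_slice · y)
  exact H.qiMeas_union _ _ (disjoint_left.mpr fun _ hA hB => disjoint_left.mp hAB hA hB)
    (hslice hA) (hslice hB) (hslice hAB')

lemma fullSlices_union [T1Space Y] {A B : Set (X × Y)}
    (hAB : Disjoint A B) (hA : IsCompact A ∨ IsOpen A) (hB : IsCompact B ∨ IsOpen B)
    (hAB' : IsCompact (A ∪ B) ∨ IsOpen (A ∪ B)) :
    fullSlices ρ k (A ∪ B) = fullSlices ρ k A ∪ fullSlices ρ k B ∧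
      Disjoint (fullSlices ρ k A) (fullSlices ρ k B) := by
  have M := H.isScaledQuasiHom
  refine ⟨subset_antisymm (fun y hy => ?_) (union_subset (M.fullSlices_mono subset_union_left)
    (M.fullSlices_mono subset_union_right)), disjoint_left.mpr fun y hyA hyB => ?_⟩
  · rw [mem_fullSlices, H.qiMeas_slice_union hAB hA hB hAB'] at hy
    rcases M.qiMeas_eq_zero_or (slice A y) with h | h
    · exact Or.inr (by rwa [h, zero_add] at hy)
    · exact Or.inl h
  · have := (H.qiMeas_slice_union hAB hA hB hAB' y).symm.trans_le (H.qiMeas_le _)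
    rw [mem_fullSlices.mp hyA, mem_fullSlices.mp hyB] at this
    exact M.ofReal_ne_zero (nonpos_iff_eq_zero.mp (ENNReal.le_of_add_le_add_right
      ENNReal.ofReal_ne_top (this.trans_eq (zero_add _).symm)))

end IsSimpleMultiple

variable [T2Space X]

@[simp] lemma fiberY_apply (f : C_c(X × Y, ℝ)) (y : Y) (x : X) : fiberY f y x = f (x, y) := rfl

lemma fiberY_eq_zero_of_notMem {f : C_c(X × Y, ℝ)} {y : Y} (hy : y ∉ Prod.snd '' tsupport f) :
    fiberY f y = 0 := by
  ext x
  show f (x, y) = 0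
  exact image_eq_zero_of_notMem_tsupport fun h => hy ⟨(x, y), h, rfl⟩

lemma fiberY_add (f g : C_c(X × Y, ℝ)) (y : Y) : fiberY (f + g) y = fiberY f y + fiberY g y :=
  rfl

lemma fiberY_smul (a : ℝ) (f : C_c(X × Y, ℝ)) (y : Y) : fiberY (a • f) y = a • fiberY f y := rfl

lemma fiberY_compCc (φ : C(ℝ, ℝ)) (hφ : φ 0 = 0) (f : C_c(X × Y, ℝ)) (y : Y) :
    fiberY (compCc φ hφ f) y = compCc φ hφ (fiberY f y) := rfl

variable {ρ : C_c(X, ℝ) → ℝ} {η : C_c(Y, ℝ) → ℝ} {k l : ℝ}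

lemma continuous_Tmap (M : IsScaledQuasiHom ρ k) (f : C_c(X × Y, ℝ)) :
    Continuous (Tmap ρ f) := by
  refine Metric.continuous_iff'.mpr fun y₀ ε hε => ?_
  set b := ε / (4 * k)
  have hb : 0 < b := div_pos hε (mul_pos four_pos M.pos)
  have hopen : IsOpen {p : X × Y | |f p - f (p.1, y₀)| < b} :=
    isOpen_lt (by fun_prop) continuous_const
  obtain ⟨U, V, -, hV, hKU, hy₀V, hUV⟩ := generalized_tube_lemma
    (f.hasCompactSupport.image continuous_fst) isCompact_singleton hopen fun p hp => by
      obtain ⟨-, rfl : p.2 = y₀⟩ := hp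
      simpa using hb
  filter_upwards [hV.mem_nhds (hy₀V rfl)] with y hy
  have hclose : ∀ x, |fiberY f y x - fiberY f y₀ x| ≤ b := fun x => by
    by_cases hx : x ∈ Prod.fst '' tsupport f
    · exact (hUV ⟨hKU hx, hy⟩).le
    · simp [apply_eq_zero_of_notMem_image_fst hx, hb.le]
  rw [Real.dist_eq]
  calc |Tmap ρ f y - Tmap ρ f y₀| ≤ 2 * k * b := M.abs_map_sub_le hb hclose
    _ = ε / 2 := by simp only [b]; field_simp [M.pos.ne']; ring
    _ < ε := half_lt_self hε

variable [T2Space Y]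

lemma hasCompactSupport_Tmap (hρ : IsQuasiIntegral ρ) (f : C_c(X × Y, ℝ)) :
    HasCompactSupport (Tmap ρ f) :=
  HasCompactSupport.intro (f.hasCompactSupport.image continuous_snd) fun y hy => by
    rw [Tmap, fiberY_eq_zero_of_notMem hy, hρ.map_zero]

lemma TCc_apply (M : IsScaledQuasiHom ρ k) (f : C_c(X × Y, ℝ)) (y : Y) :
    TCc ρ f y = ρ (fiberY f y) := by
  rw [TCc, dif_pos ⟨continuous_Tmap M f, hasCompactSupport_Tmap M.isQuasiIntegral f⟩]
  rfl

lemma TCc_compCc (M : IsScaledQuasiHom ρ k) (f : C_c(X × Y, ℝ)) (φ : C(ℝ, ℝ))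
    (hφ : φ 0 = 0) :
    TCc ρ (compCc φ hφ f) =
      compCc ⟨fun s => k * φ (s / k), by fun_prop⟩ (by simp [hφ]) (TCc ρ f) := by
  ext y
  simp only [TCc_apply M, fiberY_compCc, M.map_compCc, compCc_apply, ContinuousMap.coe_mk]

lemma prodQI_isQuasiIntegral {η : C_c(Y, ℝ) → ℝ} (M : IsScaledQuasiHom ρ k)
    (hη : IsQuasiIntegral η) : IsQuasiIntegral (prodQI η ρ) where
  smul a f := by
    have : TCc ρ (a • f) = a • TCc ρ f := by
      ext y
      rw [TCc_apply M, CompactlySupportedContinuousMap.smul_apply, TCc_apply M, fiberY_smul,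
        M.isQuasiIntegral.smul, smul_eq_mul]
    rw [prodQI, this, hη.smul]
    rfl
  add := by
    rintro f g h ⟨φ, hφ, hgf⟩ ⟨ψ, hψ, hhf⟩
    obtain rfl : g = compCc φ hφ f := CompactlySupportedContinuousMap.ext hgf
    obtain rfl : h = compCc ψ hψ f := CompactlySupportedContinuousMap.ext hhf
    have : TCc ρ (compCc φ hφ f + compCc ψ hψ f) =
        TCc ρ (compCc φ hφ f) + TCc ρ (compCc ψ hψ f) := by
      ext y
      simp only [CompactlySupportedContinuousMap.add_apply, TCc_apply M, fiberY_add,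
        fiberY_compCc]
      exact M.isQuasiIntegral.add _ _ _ (inB_compCc _ _ _) (inB_compCc _ _ _)
    simp only [prodQI, this, TCc_compCc M]
    exact hη.add _ _ _ (inB_compCc _ _ _) (inB_compCc _ _ _)
  pos f hf := hη.pos _ fun y => by
    rw [TCc_apply M]
    exact M.isQuasiIntegral.pos _ fun x => hf (x, y)

lemma prodQI_isScaledQuasiHom {η : C_c(Y, ℝ) → ℝ} {l : ℝ} (M : IsScaledQuasiHom ρ k)
    (N : IsScaledQuasiHom η l) : IsScaledQuasiHom (prodQI η ρ) (k * l) where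
  isQuasiIntegral := prodQI_isQuasiIntegral M N.isQuasiIntegral
  pos := mul_pos M.pos N.pos
  map_compCc f φ hφ := by
    simp only [prodQI, TCc_compCc M, N.map_compCc, ContinuousMap.coe_mk, div_div]
    ring_nf

namespace IsScaledQuasiHom

variable (M : IsScaledQuasiHom ρ k) (N : IsScaledQuasiHom η l)
include M

lemma exists_le_map_fiberY [LocallyCompactSpace Y] {A : Set (X × Y)} (hA : IsOpen A) {K : Set Y}
    (hK : IsCompact K) (hKA : K ⊆ fullSlices ρ k A) :
    ∃ g : C_c(X × Y, ℝ), (∀ p, 0 ≤ g p) ∧ tsupport g ⊆ A ∧ ∀ y ∈ K, k ≤ ρ (fiberY g y) := by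
  -- Near each point of `K` take `u ⊗ w`, with `u` a test of value `k` and `w = 1` near the point,
  -- and add finitely many of them.
  refine hK.induction_on (p := fun B => ∃ g : C_c(X × Y, ℝ), (∀ p, 0 ≤ g p) ∧
    tsupport g ⊆ A ∧ ∀ y ∈ B, k ≤ ρ (fiberY g y)) ⟨0, fun _ => le_rfl, by simp, by simp⟩
    (fun B B' hBB' ⟨g, hg, hgA, hgk⟩ => ⟨g, hg, hgA, fun y hy => hgk y (hBB' hy)⟩)
    (fun B B' ⟨g, hg, hgA, hgk⟩ ⟨g', hg', hg'A, hg'k⟩ => ⟨g + g',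
      fun p => add_nonneg (hg p) (hg' p), (tsupport_add g g').trans (union_subset hgA hg'A), ?_⟩)
    fun y hy => ?_
  · rintro y (hy | hy)
    · exact (hgk y hy).trans (M.map_mono (fun x => hg _) fun x => le_add_of_nonneg_right (hg' _))
    · exact (hg'k y hy).trans (M.map_mono (fun x => hg' _) fun x => le_add_of_nonneg_left (hg _))
  obtain ⟨u, hu, huk, V, hV, hyV, huVA⟩ := M.exists_tube_test hA (hKA hy)
  obtain ⟨w, hw, hwV, hw1⟩ := exists_eventually_eq_one hV hyV
  refine ⟨{y' | w y' = 1}, mem_nhdsWithin_of_mem_nhds hw1, tensor u w,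
    fun p => mul_nonneg (hu p.1).1 (hw p.2),
    (tsupport_tensor_subset u w).trans ((prod_mono subset_rfl hwV).trans huVA), fun y' hy' => ?_⟩
  have : fiberY (tensor u w) y' = u := by
    ext x
    simp [tensor, show w y' = 1 from hy']
  rw [this, huk]

include N

lemma qiMeas_fullSlices_eq_of_ne_zero {W : Set (X × Y)} (hW : IsOpen W)
    (hWπ : qiMeas (prodQI η ρ) W ≠ 0) : qiMeas η (fullSlices ρ k W) = ENNReal.ofReal l := by
  obtain ⟨g, hg, hgW, hgπ⟩ := exists_lt_of_lt_qiOpen (r := 0)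
    (by rwa [ENNReal.ofReal_zero, pos_iff_ne_zero, ← qiMeas_of_isOpen hW])
  refine N.qiMeas_eq_of_le ((N.qiMeas_pos_set _ hgπ).ge.trans (qiMeas_mono fun y hy => ?_))
  rw [mem_ofPred_eq, TCc_apply M] at hy
  refine M.qiMeas_eq_of_le ((M.qiMeas_pos_set _ hy).ge.trans (qiMeas_mono fun x hx => ?_))
  exact hgW (subset_tsupport _ (ne_of_gt (show 0 < g (x, y) from hx)))

variable [LocallyCompactSpace Y]

lemma qiMeas_prodQI_eq_of_subset {A : Set (X × Y)} (hA : IsOpen A) {K : Set Y}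
    (hK : IsCompact K) (hKA : K ⊆ fullSlices ρ k A) (hKl : qiMeas η K = ENNReal.ofReal l) :
    qiMeas (prodQI η ρ) A = ENNReal.ofReal (k * l) := by
  obtain ⟨g, hg, hgA, hgk⟩ := M.exists_le_map_fiberY hA hK hKA
  have hgπ : 0 < prodQI η ρ g := by
    by_contra! hle
    have hlevel := N.qiMeas_level_eq_zero (TCc ρ g) (half_pos M.pos)
      ((div_nonpos_of_nonpos_of_nonneg hle N.pos.le).trans_lt (half_pos M.pos))
    refine N.ofReal_ne_zero (hKl.symm.trans (nonpos_iff_eq_zero.mp (hlevel ▸ qiMeas_mono ?_)))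
    intro y hy
    rw [mem_ofPred_eq, TCc_apply M]
    linarith [hgk y hy, half_lt_self M.pos]
  have hπ := prodQI_isScaledQuasiHom M N
  refine (hπ.qiMeas_eq_zero_or A).resolve_left fun h0 => hgπ.ne' ?_
  exact hπ.isQuasiIntegral.map_eq_zero_of_tsupport_subset (U := A)
    (by rwa [← qiMeas_of_isOpen hA]) hgA

lemma qiMeas_prodQI_of_isOpen {W : Set (X × Y)} (hW : IsOpen W) :
    qiMeas (prodQI η ρ) W = ENNReal.ofReal k * qiMeas η (fullSlices ρ k W) := by
  rcases N.qiMeas_eq_zero_or (fullSlices ρ k W) with h | h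
  · rw [h, mul_zero]
    by_contra hne
    exact N.ofReal_ne_zero ((M.qiMeas_fullSlices_eq_of_ne_zero N hW hne).symm.trans h)
  · obtain ⟨K, hK, hKW, hKl⟩ := N.exists_isCompact_subset (M.isOpen_fullSlices hW) h
    rw [M.qiMeas_prodQI_eq_of_subset N hW hK hKW hKl, h, ENNReal.ofReal_mul M.pos.le]

lemma qiMeas_prodQI_of_isCompact {L : Set (X × Y)} (hL : IsCompact L) :
    qiMeas (prodQI η ρ) L = ENNReal.ofReal k * qiMeas η (fullSlices ρ k L) := by
  rcases N.qiMeas_eq_zero_or (fullSlices ρ k L) with h | h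
  · obtain ⟨V, hV, hLV, hV0⟩ := N.exists_isOpen_superset h
    obtain ⟨W, hW, hLW, hWV⟩ := M.exists_fullSlices_subset hL hV hLV
    rw [h, mul_zero]
    refine nonpos_iff_eq_zero.mp ((qiMeas_mono hLW).trans ?_)
    calc qiMeas (prodQI η ρ) W = ENNReal.ofReal k * qiMeas η (fullSlices ρ k W) :=
          M.qiMeas_prodQI_of_isOpen N hW
      _ ≤ ENNReal.ofReal k * qiMeas η V := mul_le_mul_right (qiMeas_mono hWV) _
      _ = 0 := by rw [hV0, mul_zero]
  · have hW : ∀ W, IsOpen W ∧ L ⊆ W →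
        qiMeas (prodQI η ρ) W = ENNReal.ofReal k * ENNReal.ofReal l := fun W hW => by
      rw [M.qiMeas_prodQI_of_isOpen N hW.1,
        N.qiMeas_eq_of_le (h ▸ qiMeas_mono (M.fullSlices_mono hW.2))]
    rw [h, qiMeas_eq_iInf]
    exact le_antisymm ((iInf₂_le univ ⟨isOpen_univ, subset_univ _⟩).trans
      (hW univ ⟨isOpen_univ, subset_univ _⟩).le) (le_iInf₂ fun W hW' => (hW W hW').ge)

lemma qiMeas_prodQI {S : Set (X × Y)} (hS : IsCompact S ∨ IsOpen S) :
    qiMeas (prodQI η ρ) S = ENNReal.ofReal k * qiMeas η (fullSlices ρ k S) :=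
  hS.elim (M.qiMeas_prodQI_of_isCompact N) (M.qiMeas_prodQI_of_isOpen N)

end IsScaledQuasiHom

lemma IsSimpleMultiple.prodQI [LocallyCompactSpace Y] (HX : IsSimpleMultiple ρ k)
    (HY : IsSimpleMultiple η l) :
    IsSimpleMultiple (prodQI η ρ) (k * l) := by
  have M := HX.isScaledQuasiHom
  have N := HY.isScaledQuasiHom
  have hπ := prodQI_isScaledQuasiHom M N
  refine ⟨hπ.isQuasiIntegral, hπ.pos, fun A _ => hπ.qiMeas_eq_zero_or A,
    fun A B hAB hA hB hAB' => ?_⟩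
  have hfull : ∀ {S : Set (X × Y)}, IsCompact S ∨ IsOpen S →
      IsCompact (fullSlices ρ k S) ∨ IsOpen (fullSlices ρ k S) :=
    Or.imp M.isCompact_fullSlices M.isOpen_fullSlices
  obtain ⟨hunion, hdisj⟩ := HX.fullSlices_union hAB hA hB hAB'
  rw [M.qiMeas_prodQI N hAB', M.qiMeas_prodQI N hA, M.qiMeas_prodQI N hB, hunion,
    HY.qiMeas_union _ _ hdisj (hfull hA) (hfull hB) (hunion ▸ hfull hAB'), mul_add]

end Product

theorem statement11_general {X Y : Type*}
    [TopologicalSpace X] [T2Space X]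
    [TopologicalSpace Y] [LocallyCompactSpace Y] [T2Space Y]
    (ρ : C_c(X, ℝ) → ℝ) (η : C_c(Y, ℝ) → ℝ)
    (hρ : IsQuasiIntegral ρ) (hη : IsQuasiIntegral η)
    (hρas : IsAlmostSimpleQI ρ) (hηas : IsAlmostSimpleQI η) :
    IsQuasiIntegral (prodQI η ρ) ∧ IsAlmostSimpleQI (prodQI η ρ) := by
  obtain ⟨k, HX⟩ := hρas.isSimpleMultiple hρ
  obtain ⟨l, HY⟩ := hηas.isSimpleMultiple hη
  have H := HX.prodQI HY
  exact ⟨H.isQuasiIntegral, H.isAlmostSimpleQI⟩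

theorem statement11 {X Y : Type*}
    [TopologicalSpace X] [LocallyCompactSpace X] [T2Space X] [ConnectedSpace X]
    [TopologicalSpace Y] [LocallyCompactSpace Y] [T2Space Y] [ConnectedSpace Y]
    (ρ : C_c(X, ℝ) → ℝ) (η : C_c(Y, ℝ) → ℝ)
    (hρ : IsQuasiIntegral ρ) (hη : IsQuasiIntegral η)
    (hρas : IsAlmostSimpleQI ρ) (hηas : IsAlmostSimpleQI η) :
    IsQuasiIntegral (prodQI η ρ) ∧ IsAlmostSimpleQI (prodQI η ρ) :=
  statement11_general ρ η hρ hη hρas hηas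

end QLF
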